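/- Let G be a chordal graph with edge {x,y}, let G~ be the graph on V(G)\{x,y} with edges E(G\{x,y}) ∪ {{u,v} : u ∈ N_G(x)\{y}, v ∈ N_G(y)\{x}, u ≠ v}, and let M be an induced matching of G~. Then at least one of the following holds: (i) V(M) ∩ N_G(x) = ∅; (ii) V(M) ∩ N_G(y) = ∅; (iii) exactly one edge e ∈ M satisfies e ∩ (N_G(x) ∪ N_G(y)) ≠ ∅. -/

import Mathlib

open scoped Classical

variable {V : Type*} [DecidableEq V]

/-- A matching of a hypergraph with edge set `E`: a set of pairwise disjoint edges. -/
def IsMatching (E M : Finset (Finset V)) : Prop :=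
  M ⊆ E ∧ ∀ e ∈ M, ∀ f ∈ M, e ≠ f → Disjoint e f

/-- The set of vertices covered by a set of edges. -/
def verts (M : Finset (Finset V)) : Finset V := M.sup id

/-- Edge set of the induced sub-hypergraph on the vertex set `W`. -/
def inducedSub (E : Finset (Finset V)) (W : Finset V) : Finset (Finset V) :=
  E.filter (fun e => e ⊆ W)

/-- The matching number. -/
noncomputable def matchNum (E : Finset (Finset V)) : ℕ :=
  sSup {n : ℕ | ∃ M : Finset (Finset V), IsMatching E M ∧ M.card = n}

/-- `P` is a partition of the finite set `M` into nonempty pairwise disjoint parts. -/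
def IsPartitionOf (M : Finset (Finset V)) (P : Finset (Finset (Finset V))) : Prop :=
  (∀ p ∈ P, p ≠ ∅) ∧ (∀ p ∈ P, ∀ q ∈ P, p ≠ q → Disjoint p q) ∧ P.sup id = M

/-- A partition witnessing that `M` is a generalized `k`-admissible matching. -/
def GenAdmPartition (E M : Finset (Finset V)) (k : ℕ)
    (P : Finset (Finset (Finset V))) : Prop :=
  IsPartitionOf M P ∧
  (∀ e ∈ inducedSub E (verts M), ∃ p ∈ P, e ⊆ verts p) ∧
  k ≤ M.card ∧ M.card ≤ P.card + k - 1 ∧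
  ∀ p ∈ P, ∀ M' : Finset (Finset V),
    IsMatching (inducedSub E (verts p)) M' → M'.card = p.card → verts M' = verts p

/-- Generalized `k`-admissible matching. -/
def IsGenAdmissible (E M : Finset (Finset V)) (k : ℕ) : Prop :=
  IsMatching E M ∧ ∃ P, GenAdmPartition E M k P

/-- A partition witnessing that `M` is a `k`-admissible matching (d-uniform setting). -/
def AdmPartition (E M : Finset (Finset V)) (k : ℕ)
    (P : Finset (Finset (Finset V))) : Prop :=
  IsPartitionOf M P ∧
  (∀ e ∈ inducedSub E (verts M), ∃ p ∈ P, e ⊆ verts p) ∧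
  M.card ≤ P.card + k - 1

/-- `k`-admissible matching. -/
def IsAdmissible (E M : Finset (Finset V)) (k : ℕ) : Prop :=
  IsMatching E M ∧ ∃ P, AdmPartition E M k P

/-- The `k`-admissible matching number `aim(H, k)`. -/
noncomputable def aim (E : Finset (Finset V)) (k : ℕ) : ℕ :=
  sSup {n : ℕ | ∃ M : Finset (Finset V), IsAdmissible E M k ∧ M.card = n}

/-- The edges of a simple graph, as a set of `2`-element vertex subsets. -/
noncomputable def graphEdges [Fintype V] (G : SimpleGraph V) : Finset (Finset V) :=
  Finset.univ.filter (fun s : Finset V =>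
    s.card = 2 ∧ ∀ a ∈ s, ∀ b ∈ s, a ≠ b → G.Adj a b)

/-- The `k`-admissible matching number of a graph. -/
noncomputable def aimG [Fintype V] (G : SimpleGraph V) (k : ℕ) : ℕ :=
  aim (graphEdges G) k

/-- The Erey–Hibi `k`-admissible matchings: additionally each part must induce a forest. -/
def IsAdmissibleStar [Fintype V] (G : SimpleGraph V) (M : Finset (Finset V)) (k : ℕ) : Prop :=
  IsMatching (graphEdges G) M ∧ ∃ P : Finset (Finset (Finset V)),
    AdmPartition (graphEdges G) M k P ∧
    ∀ p ∈ P, (SimpleGraph.induce (↑(verts p) : Set V) G).IsAcyclic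

/-- The Erey–Hibi `k`-admissible matching number `aim*(G,k)`. -/
noncomputable def aimStar [Fintype V] (G : SimpleGraph V) (k : ℕ) : ℕ :=
  sSup {n : ℕ | ∃ M : Finset (Finset V), IsAdmissibleStar G M k ∧ M.card = n}

/-- The graph `G~` associated to the edge `{x,y}` of `G`: edges of `G \ {x,y}` together
with all pairs `{u,v}`, `u ∈ N_G(x) \ {y}`, `v ∈ N_G(y) \ {x}`, `u ≠ v`. -/
def tildeGraph (G : SimpleGraph V) (x y : V) : SimpleGraph V :=
  SimpleGraph.fromRel (fun u v =>
    u ≠ x ∧ u ≠ y ∧ v ≠ x ∧ v ≠ y ∧ (G.Adj u v ∨ (G.Adj x u ∧ G.Adj y v)))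

/-- A graph is chordal if it has no induced cycle of length at least `4`. -/
def Chordal {W : Type*} (G : SimpleGraph W) : Prop :=
  ∀ n : ℕ, 4 ≤ n → ¬ ∃ f : Fin n → W, Function.Injective f ∧
    ∀ i j : Fin n, G.Adj (f i) (f j) ↔
      ((j : ℕ) = ((i : ℕ) + 1) % n ∨ (i : ℕ) = ((j : ℕ) + 1) % n)

/-! If two distinct edges `e, f` of `M` contained a neighbour `u ∈ e` of `x` and a neighbour
`w ∈ f` of `y`, then `uw` would be an edge of `G~` inside `V(M)` that is
not in `M`, contradicting that `M` is induced. Hence all edges meeting `N_G(x)` or `N_G(y)`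
coincide as soon as both neighbourhoods are met. -/

lemma mem_verts {M : Finset (Finset V)} {v : V} : v ∈ verts M ↔ ∃ e ∈ M, v ∈ e := by
  simp [verts, Finset.mem_sup]

lemma IsMatching.eq_of_mem_of_mem {E M : Finset (Finset V)} (hM : IsMatching E M)
    {e f : Finset V} (he : e ∈ M) (hf : f ∈ M) {v : V} (hve : v ∈ e) (hvf : v ∈ f) : e = f := by
  by_contra hef
  exact Finset.disjoint_left.1 (hM.2 e he f hf hef) hve hvf

section graphEdges

variable [Fintype V] {H : SimpleGraph V}

lemma pair_mem_graphEdges {u w : V} (h : H.Adj u w) : {u, w} ∈ graphEdges H := by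
  simp only [graphEdges, Finset.mem_filter, Finset.mem_univ, true_and, Finset.mem_insert,
    Finset.mem_singleton]
  refine ⟨Finset.card_pair h.ne, ?_⟩
  rintro a (rfl | rfl) b (rfl | rfl) hab
  exacts [absurd rfl hab, h, h.symm, absurd rfl hab]

lemma exists_adj_of_mem_graphEdges {e : Finset V} (he : e ∈ graphEdges H) {v : V}
    (hv : v ∈ e) : ∃ w, H.Adj v w := by
  simp only [graphEdges, Finset.mem_filter, Finset.mem_univ, true_and] at he
  obtain ⟨w, hw, hwv⟩ := Finset.exists_mem_ne (by omega : 1 < e.card) v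
  exact ⟨w, he.2 v hv w hw hwv.symm⟩

lemma not_adj_of_inducedSub_eq {M : Finset (Finset V)} (hM : IsMatching (graphEdges H) M)
    (hind : inducedSub (graphEdges H) (verts M) = M) {e f : Finset V} (he : e ∈ M) (hf : f ∈ M)
    (hef : e ≠ f) {u w : V} (hu : u ∈ e) (hw : w ∈ f) : ¬ H.Adj u w := by
  intro huw
  have hpair : {u, w} ∈ M := by
    rw [← hind, inducedSub, Finset.mem_filter]
    refine ⟨pair_mem_graphEdges huw, ?_⟩
    simp only [Finset.insert_subset_iff, Finset.singleton_subset_iff]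
    exact ⟨mem_verts.2 ⟨e, he, hu⟩, mem_verts.2 ⟨f, hf, hw⟩⟩
  have hpe := hM.eq_of_mem_of_mem hpair he (Finset.mem_insert_self u {w}) hu
  have hpf := hM.eq_of_mem_of_mem hpair hf
    (Finset.mem_insert_of_mem (Finset.mem_singleton_self w)) hw
  exact hef (hpe.symm.trans hpf)

end graphEdges

section tildeGraph

variable {G : SimpleGraph V} {x y : V}

omit [DecidableEq V] in
lemma ne_of_tildeGraph_adj {u v : V} (h : (tildeGraph G x y).Adj u v) : u ≠ x ∧ u ≠ y := by
  rw [tildeGraph, SimpleGraph.fromRel_adj] at h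
  rcases h.2 with ⟨hux, huy, -⟩ | ⟨-, -, hux, huy, -⟩
  exacts [⟨hux, huy⟩, ⟨hux, huy⟩]

omit [DecidableEq V] in
lemma tildeGraph_adj_of_adj_of_adj {u w : V} (hxu : G.Adj x u) (hyw : G.Adj y w) (huw : u ≠ w)
    (hux : u ≠ x) (huy : u ≠ y) (hwx : w ≠ x) (hwy : w ≠ y) : (tildeGraph G x y).Adj u w := by
  rw [tildeGraph, SimpleGraph.fromRel_adj]
  exact ⟨huw, Or.inl ⟨hux, huy, hwx, hwy, Or.inr ⟨hxu, hyw⟩⟩⟩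

variable [Fintype V]

lemma ne_of_mem_graphEdges_tildeGraph {e : Finset V} (he : e ∈ graphEdges (tildeGraph G x y))
    {v : V} (hv : v ∈ e) : v ≠ x ∧ v ≠ y :=
  let ⟨_, hvw⟩ := exists_adj_of_mem_graphEdges he hv
  ne_of_tildeGraph_adj hvw

lemma eq_of_adj_left_of_adj_right {M : Finset (Finset V)}
    (hM : IsMatching (graphEdges (tildeGraph G x y)) M)
    (hind : inducedSub (graphEdges (tildeGraph G x y)) (verts M) = M)
    {e f : Finset V} (he : e ∈ M) (hf : f ∈ M) {u w : V} (hu : u ∈ e) (hw : w ∈ f)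
    (hxu : G.Adj x u) (hyw : G.Adj y w) : e = f := by
  by_contra hef
  have huw : u ≠ w := fun h => hef (hM.eq_of_mem_of_mem he hf hu (h ▸ hw))
  obtain ⟨hux, huy⟩ := ne_of_mem_graphEdges_tildeGraph (hM.1 he) hu
  obtain ⟨hwx, hwy⟩ := ne_of_mem_graphEdges_tildeGraph (hM.1 hf) hw
  exact not_adj_of_inducedSub_eq hM hind he hf hef hu hw
    (tildeGraph_adj_of_adj_of_adj hxu hyw huw hux huy hwx hwy)

end tildeGraph

theorem inducedMatching_tildeGraph_general [Fintype V] (G : SimpleGraph V) (x y : V)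
    (M : Finset (Finset V))
    (hM : IsMatching (graphEdges (tildeGraph G x y)) M)
    (hind : inducedSub (graphEdges (tildeGraph G x y)) (verts M) = M) :
    ((↑(verts M) : Set V) ∩ G.neighborSet x = ∅) ∨
    ((↑(verts M) : Set V) ∩ G.neighborSet y = ∅) ∨
    (∃! e : Finset V, e ∈ M ∧
      ((↑e : Set V) ∩ (G.neighborSet x ∪ G.neighborSet y)).Nonempty) := by
  rw [or_iff_not_imp_left, or_iff_not_imp_left]
  intro hx hy
  obtain ⟨p, hpM, hxp⟩ := Set.nonempty_iff_ne_empty.2 hx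
  obtain ⟨q, hqM, hyq⟩ := Set.nonempty_iff_ne_empty.2 hy
  obtain ⟨e, he, hpe⟩ := mem_verts.1 hpM
  obtain ⟨f, hf, hqf⟩ := mem_verts.1 hqM
  obtain rfl : e = f := eq_of_adj_left_of_adj_right hM hind he hf hpe hqf hxp hyq
  refine ⟨e, ⟨he, p, hpe, Or.inl hxp⟩, ?_⟩
  rintro g ⟨hg, w, hwg, hxw | hyw⟩
  · exact eq_of_adj_left_of_adj_right hM hind hg he hwg hqf hxw hyq
  · exact (eq_of_adj_left_of_adj_right hM hind he hg hpe hwg hxp hyw).symm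

/-- For `G` chordal with edge `{x,y}` and `M` an induced matching of `G~`, either
`V(M) ∩ N_G(x) = ∅`, or `V(M) ∩ N_G(y) = ∅`, or exactly one edge of `M` meets
`N_G(x) ∪ N_G(y)`. -/
theorem inducedMatching_tildeGraph [Fintype V] (G : SimpleGraph V) (x y : V)
    (hchordal : Chordal G) (hxy : G.Adj x y)
    (M : Finset (Finset V))
    (hM : IsMatching (graphEdges (tildeGraph G x y)) M)
    (hind : inducedSub (graphEdges (tildeGraph G x y)) (verts M) = M) :
    ((↑(verts M) : Set V) ∩ G.neighborSet x = ∅) ∨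
    ((↑(verts M) : Set V) ∩ G.neighborSet y = ∅) ∨
    (∃! e : Finset V, e ∈ M ∧
      ((↑e : Set V) ∩ (G.neighborSet x ∪ G.neighborSet y)).Nonempty) :=
  inducedMatching_tildeGraph_general G x y M hM hind
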